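/- Let g, h: X* → X* be morphisms and let x ∈ X be a letter such that g^ω(x) and h^ω(x) exist. Then g^ω(x) = h^ω(x) if and only if every finite prefix of g^ω(x) belongs to COMP(g, h). -/
import Mathlib


open Filter Set

variable {X : Type*}

/-- Apply the morphism with letter images `g` to a word. -/
def applyM (g : X → List X) (w : List X) : List X := w.flatMap g

/-- `iterM g k w` is `g^k(w)`. -/
def iterM (g : X → List X) (k : ℕ) (w : List X) : List X := (applyM g)^[k] w

/-- The letter map of the composition `g ∘ h` (first `h`, then `g`). -/
def compM (g h : X → List X) : X → List X := fun a => applyM g (h a)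

/-- The letter map of the power `g^k`. -/
def powM (g : X → List X) (k : ℕ) : X → List X := fun a => iterM g k [a]

/-- A morphism is primitive if some power maps every letter to a word containing every letter. -/
def Primitive (g : X → List X) : Prop := ∃ k : ℕ, 0 < k ∧ ∀ a b : X, a ∈ iterM g k [b]

/-- `Mg g` is the maximal length of the image of a letter. -/
def Mg [Fintype X] (g : X → List X) : ℕ := Finset.univ.sup fun x => (g x).length

/-- A morphism is growing if the lengths of iterated images of every letter tend to infinity. -/
def Growing (g : X → List X) : Prop :=
  ∀ x : X, Tendsto (fun i => (iterM g i [x]).length) atTop atTop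

/-- `w` is a (finite) prefix of the infinite word `s`. -/
def IsPrefI (w : List X) (s : ℕ → X) : Prop := ∀ i (h : i < w.length), w[i]'h = s i

/-- `v` is a factor of the infinite word `s`. -/
def IsFactorI (v : List X) (s : ℕ → X) : Prop :=
  ∃ j : ℕ, ∀ i (h : i < v.length), v[i]'h = s (j + i)

/-- `g^ω(x)` exists. -/
def OmegaExists (g : X → List X) (x : X) : Prop :=
  [x] <+: g x ∧ Tendsto (fun i => (iterM g i [x]).length) atTop atTop

/-- `s = g^ω(x)`. -/
def IsOmega (g : X → List X) (x : X) (s : ℕ → X) : Prop :=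
  OmegaExists g x ∧ ∀ i : ℕ, IsPrefI (iterM g i [x]) s

/-- `s = u^ω` for the nonempty word `u`. -/
def IsPeriodicWord (s : ℕ → X) (u : List X) : Prop :=
  u ≠ [] ∧ ∀ (i : ℕ) (h : i % u.length < u.length), s i = u[i % u.length]'h

/-- A morphism is looping. -/
def Looping (g : X → List X) : Prop :=
  ∃ k : ℕ, 0 < k ∧ ∃ x : X, ∃ u : List X, ∃ s : ℕ → X,
    IsOmega (powM g k) x s ∧ IsPeriodicWord s u

/-- A morphism is loop-free if it is not looping. -/
def LoopFree (g : X → List X) : Prop := ¬ Looping g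

/-- `p` is a period of `u`. -/
def HasPeriod (u : List X) (p : ℕ) : Prop :=
  0 < p ∧ ∀ i : ℕ, i + p < u.length → u[i + p]? = u[i]?

/-- The smallest period of `u`. -/
noncomputable def PER (u : List X) : ℕ := sInf {p | HasPeriod u p}

/-- A primitive word: nonempty and not a proper power of a shorter word. -/
def PrimitiveWord (u : List X) : Prop :=
  u ≠ [] ∧ ¬∃ (v : List X) (j : ℕ), 2 ≤ j ∧ v.length < u.length ∧
    u = (List.replicate j v).flatten

/-- `COMP g h` : the set of words whose images under `g` and `h` are prefix-comparable. -/
def COMP (g h : X → List X) : Set (List X) :=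
  {w | ∃ u₁ u₂ : List X, applyM g w ++ u₁ = applyM h w ++ u₂}

/-- `BAL g h`. -/
noncomputable def BAL (g h : X → List X) : ℕ∞ :=
  ⨆ (x : X) (k : ℕ),
    ((((applyM g (iterM g k [x])).length : ℤ) -
      ((applyM h (iterM g k [x])).length : ℤ)).natAbs : ℕ∞)

/-- The set of factors of length `q` of the word `w`. -/
def Fq (q : ℕ) (w : List X) : Set (List X) := {v | v.length = q ∧ v <:+: w}

/-- The set of factors of length `q` of words of `L`. -/
def FqL (q : ℕ) (L : Set (List X)) : Set (List X) := ⋃ w ∈ L, Fq q w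

/-- `A n = ⌊9 n³ √(n log n)⌋`. -/
noncomputable def Abound (n : ℕ) : ℕ := ⌊9 * (n : ℝ)^3 * Real.sqrt (n * Real.log n)⌋₊
section Helpers

lemma applyM_append' (g : X → List X) (u v : List X) :
    applyM g (u ++ v) = applyM g u ++ applyM g v := by
  simp [applyM]

lemma applyM_prefix' (g : X → List X) {u v : List X} (h : u <+: v) :
    applyM g u <+: applyM g v := by
  obtain ⟨t, rfl⟩ := h
  exact ⟨applyM g t, (applyM_append' g u t).symm⟩

lemma iterM_succ' (g : X → List X) (k : ℕ) (w : List X) :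
    iterM g (k+1) w = applyM g (iterM g k w) := Function.iterate_succ_apply' _ _ _

lemma isPrefI_of_prefix' {u v : List X} {s : ℕ → X} (h : u <+: v) (hv : IsPrefI v s) :
    IsPrefI u s := by
  intro i hi
  obtain ⟨t, rfl⟩ := h
  rw [← hv i (by simp; omega)]
  exact (List.getElem_append_left hi).symm

lemma prefI_comparable' {u v : List X} {s : ℕ → X} (hu : IsPrefI u s) (hv : IsPrefI v s)
    (hlen : u.length ≤ v.length) : u <+: v := by
  have he : u = v.take u.length := by
    apply List.ext_getElem (by simp [hlen])
    intro i h1 h2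
    rw [List.getElem_take, hu i h1, hv i (lt_of_lt_of_le h1 hlen)]
  exact he ▸ List.take_prefix _ _

lemma pref_applyM' {g : X → List X} {x : X} {sg : ℕ → X} (hg : IsOmega g x sg)
    {w : List X} (hw : IsPrefI w sg) : IsPrefI (applyM g w) sg := by
  obtain ⟨i, hi⟩ := (hg.1.2.eventually_ge_atTop w.length).exists
  have h1 : w <+: iterM g i [x] := prefI_comparable' hw (hg.2 i) hi
  have h2 : applyM g w <+: iterM g (i+1) [x] := by
    rw [iterM_succ']; exact applyM_prefix' g h1
  exact isPrefI_of_prefix' h2 (hg.2 (i+1))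

lemma mem_COMP_iff' (g h : X → List X) (w : List X) :
    w ∈ COMP g h ↔ (applyM g w <+: applyM h w ∨ applyM h w <+: applyM g w) := by
  constructor
  · rintro ⟨u1, u2, he⟩
    have p1 : applyM g w <+: applyM h w ++ u2 := ⟨u1, he⟩
    have p2 : applyM h w <+: applyM h w ++ u2 := ⟨u2, rfl⟩
    rcases le_total (applyM g w).length (applyM h w).length with hl | hl
    · exact Or.inl (List.prefix_of_prefix_length_le p1 p2 hl)
    · exact Or.inr (List.prefix_of_prefix_length_le p2 p1 hl)
  · rintro (⟨t, ht⟩ | ⟨t, ht⟩)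
    · exact ⟨t, [], by simp [ht]⟩
    · exact ⟨[], t, by simp [ht]⟩

lemma omega_zero' {g : X → List X} {x : X} {sg : ℕ → X} (hg : IsOmega g x sg) :
    sg 0 = x := by
  have h1 : IsPrefI (g x) sg := by
    have := hg.2 1
    simpa [iterM, applyM] using this
  have h2 : IsPrefI [x] sg := isPrefI_of_prefix' hg.1.1 h1
  exact (h2 0 (by simp)).symm

lemma exists_boundary' (h : X → List X) (x : X) (n : ℕ) (hn : 1 ≤ n)
    (hgrow : Tendsto (fun i => (iterM h i [x]).length) atTop atTop) :
    ∃ i, (iterM h i [x]).length ≤ n ∧ n < (iterM h (i+1) [x]).length := by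
  obtain ⟨J, hJ⟩ := Filter.eventually_atTop.mp (hgrow.eventually_gt_atTop n)
  classical
  set P : ℕ → Prop := fun j => (iterM h j [x]).length ≤ n with hP
  have hP0 : P 0 := by simp [P, iterM, hn]
  refine ⟨Nat.findGreatest P J, Nat.findGreatest_spec (Nat.zero_le J) hP0, ?_⟩
  by_cases hle : Nat.findGreatest P J + 1 ≤ J
  · have := Nat.findGreatest_is_greatest (Nat.lt_succ_self _) hle
    simpa [P] using this
  · exact hJ _ (by omega)

end Helpers

/-- Suppose `g^ω(x)` and `h^ω(x)` exist.  Then `g^ω(x) = h^ω(x)`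
iff every finite prefix of `g^ω(x)` belongs to `COMP(g,h)`. -/
theorem omega_eq_iff_prefixes_comp {X : Type*}
    (g h : X → List X) (x : X) (sg sh : ℕ → X)
    (hg : IsOmega g x sg) (hh : IsOmega h x sh) :
    sg = sh ↔ ∀ w : List X, IsPrefI w sg → w ∈ COMP g h := by
  constructor
  · intro heq w hw
    subst heq
    have hgw : IsPrefI (applyM g w) sg := pref_applyM' hg hw
    have hhw : IsPrefI (applyM h w) sg := pref_applyM' hh hw
    rw [mem_COMP_iff']
    rcases le_total (applyM g w).length (applyM h w).length with hl | hl
    · exact Or.inl (prefI_comparable' hgw hhw hl)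
    · exact Or.inr (prefI_comparable' hhw hgw hl)
  · intro hcomp
    funext n
    induction n using Nat.strong_induction_on with
    | _ n IH =>
    rcases Nat.eq_zero_or_pos n with rfl | hn
    · rw [omega_zero' hg, omega_zero' hh]
    -- transfer lemmas
    have trans1 : ∀ v : List X, v.length ≤ n → IsPrefI v sh → IsPrefI v sg := by
      intro v hv hpre k hk
      rw [hpre k hk, ← IH k (lt_of_lt_of_le hk hv)]
    have trans2 : ∀ v : List X, v.length ≤ n → IsPrefI v sg → IsPrefI v sh := by
      intro v hv hpre k hk
      rw [hpre k hk, IH k (lt_of_lt_of_le hk hv)]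
    have final : ∀ v : List X, IsPrefI v sg → IsPrefI v sh → n < v.length → sg n = sh n := by
      intro v h1 h2 hl
      rw [← h1 n hl, h2 n hl]
    obtain ⟨i, hi1, hi2⟩ := exists_boundary' h x n hn hh.1.2
    obtain ⟨j, hj1, hj2⟩ := exists_boundary' g x n hn hg.1.2
    set w : List X := iterM h i [x] with hw
    set w' : List X := iterM g j [x] with hw'
    have hwsh : IsPrefI w sh := hh.2 i
    have hwsg : IsPrefI w sg := trans1 w hi1 hwsh
    have hw'sg : IsPrefI w' sg := hg.2 j
    have hw'sh : IsPrefI w' sh := trans2 w' hj1 hw'sg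
    have hgw_sg : IsPrefI (applyM g w) sg := pref_applyM' hg hwsg
    have hhw_sh : IsPrefI (applyM h w) sh := by
      have := hh.2 (i+1); rwa [iterM_succ'] at this
    have len_hw : n < (applyM h w).length := by rwa [iterM_succ'] at hi2
    have hgw'_sg : IsPrefI (applyM g w') sg := by
      have := hg.2 (j+1); rwa [iterM_succ'] at this
    have len_gw' : n < (applyM g w').length := by rwa [iterM_succ'] at hj2
    have hhw'_sh : IsPrefI (applyM h w') sh := pref_applyM' hh hw'sh
    have compw := (mem_COMP_iff' g h w).mp (hcomp w hwsg)
    have compw' := (mem_COMP_iff' g h w').mp (hcomp w' hw'sg)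
    rcases compw with hb | hA
    · rcases compw' with hC | hd
      · exact final (applyM g w') hgw'_sg (isPrefI_of_prefix' hC hhw'_sh) len_gw'
      · -- g w <+: h w and h w' <+: g w'
        rcases le_total w.length w'.length with hle | hle
        · have hww' : w <+: w' := prefI_comparable' hwsg hw'sg hle
          have : applyM h w <+: applyM g w' := (applyM_prefix' h hww').trans hd
          exact final (applyM h w) (isPrefI_of_prefix' this hgw'_sg) hhw_sh len_hw
        · have hw'w : w' <+: w := prefI_comparable' hw'sg hwsg hle
          have : applyM g w' <+: applyM h w := (applyM_prefix' g hw'w).trans hb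
          exact final (applyM g w') hgw'_sg (isPrefI_of_prefix' this hhw_sh) len_gw'
    · exact final (applyM h w) (isPrefI_of_prefix' hA hgw_sg) hhw_sh len_hw
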